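/- Define the map F̃ from ℝ⁴ × (ℂ²∖{0}) to ℂ⁴ by F̃(x, π) = (A(x)·πˇ, πˇ) where πˇ = (-π¹, π⁰) and A(x) = (1/√2)[[x⁰+ix³, x¹+ix²],[-x¹+ix², x⁰-ix³]]. Then F̃ is a bijection onto { (w, v) ∈ ℂ²×ℂ² : v ≠ 0 }. -/

import Mathlib

/-- The standard identification A(x) of ℝ⁴ with 2×2 complex matrices. -/
noncomputable def Amat (x : Fin 4 → ℝ) : Matrix (Fin 2) (Fin 2) ℂ :=
  ((1 / Real.sqrt 2 : ℝ) : ℂ) •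
    !![(x 0 : ℂ) + (x 3 : ℂ) * Complex.I, (x 1 : ℂ) + (x 2 : ℂ) * Complex.I;
       -(x 1 : ℂ) + (x 2 : ℂ) * Complex.I, (x 0 : ℂ) - (x 3 : ℂ) * Complex.I]

/-- F̃(x, π) = (A(x)·πˇ, πˇ) with πˇ = (-π¹, π⁰). -/
noncomputable def Ftilde (p : (Fin 4 → ℝ) × (Fin 2 → ℂ)) : (Fin 2 → ℂ) × (Fin 2 → ℂ) :=
  ((Amat p.1).mulVec ![-(p.2 1), p.2 0], ![-(p.2 1), p.2 0])

/-! Since `det A(x) = |x|² / 2`, the matrix `A(x)` is invertible for `x ≠ 0`, so for fixed `v ≠ 0`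
the `ℝ`-linear map `x ↦ A(x) v` from `ℝ⁴` to `ℂ² ≅ ℝ⁴` is injective, hence bijective. Since
`π ↦ πˇ` is a bijection of `ℂ² ∖ {0}`, `F̃` is a bijection. -/

open Matrix

theorem det_Amat (x : Fin 4 → ℝ) : (Amat x).det = ((∑ i, x i ^ 2) / 2 : ℝ) := by
  have h2 : ((Real.sqrt 2 : ℝ) : ℂ) ^ 2 = 2 := by
    rw [← Complex.ofReal_pow, Real.sq_sqrt zero_le_two]; norm_num
  rw [Amat, det_smul, det_fin_two_of, Fin.sum_univ_four]
  push_cast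
  rw [Fintype.card_fin, div_pow, one_pow, h2]
  linear_combination (-((x 2 : ℂ) ^ 2 + (x 3 : ℂ) ^ 2) / 2) * Complex.I_sq

theorem eq_zero_of_Amat_mulVec_eq_zero {x : Fin 4 → ℝ} {v : Fin 2 → ℂ} (hv : v ≠ 0)
    (h : Amat x *ᵥ v = 0) : x = 0 := by
  have hdet : (Amat x).det = 0 := exists_mulVec_eq_zero_iff.mp ⟨v, hv, h⟩
  rw [det_Amat, Complex.ofReal_eq_zero, div_eq_zero_iff,
    Finset.sum_eq_zero_iff_of_nonneg fun i _ => sq_nonneg (x i)] at hdet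
  funext i
  simpa using hdet.resolve_right two_ne_zero i (Finset.mem_univ i)

noncomputable def amatMulVecLin (v : Fin 2 → ℂ) : (Fin 4 → ℝ) →ₗ[ℝ] (Fin 2 → ℂ) where
  toFun x := Amat x *ᵥ v
  map_add' x y := by
    ext i; fin_cases i <;> simp [Amat, mulVec, dotProduct, Fin.sum_univ_two] <;> ring
  map_smul' c x := by
    ext i; fin_cases i <;> simp [Amat, mulVec, dotProduct, Fin.sum_univ_two] <;> ring

theorem amatMulVecLin_bijective {v : Fin 2 → ℂ} (hv : v ≠ 0) :
    Function.Bijective (amatMulVecLin v) := by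
  have hinj : Function.Injective (amatMulVecLin v) := by
    rw [← LinearMap.ker_eq_bot, LinearMap.ker_eq_bot']
    exact fun x hx => eq_zero_of_Amat_mulVec_eq_zero hv hx
  refine ⟨hinj, (LinearMap.injective_iff_surjective_of_finrank_eq_finrank ?_).mp hinj⟩
  simp [Module.finrank_pi_fintype, Complex.finrank_real_complex]

def spinorCheck (π : Fin 2 → ℂ) : Fin 2 → ℂ := ![-(π 1), π 0]

theorem spinorCheck_spinorCheck (π : Fin 2 → ℂ) : spinorCheck (spinorCheck π) = -π := by
  ext i; fin_cases i <;> simp [spinorCheck]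

theorem spinorCheck_neg (π : Fin 2 → ℂ) : spinorCheck (-π) = -spinorCheck π := by
  ext i; fin_cases i <;> simp [spinorCheck]

theorem spinorCheck_bijective : Function.Bijective spinorCheck := by
  refine Function.bijective_iff_has_inverse.mpr ⟨fun v => -spinorCheck v, fun π => ?_, fun v => ?_⟩
  · simp [spinorCheck_spinorCheck]
  · simp [spinorCheck_neg, spinorCheck_spinorCheck]

theorem spinorCheck_eq_zero_iff {π : Fin 2 → ℂ} : spinorCheck π = 0 ↔ π = 0 :=
  spinorCheck_bijective.1.eq_iff' (by simp [spinorCheck])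

theorem Ftilde_mk (x : Fin 4 → ℝ) (π : Fin 2 → ℂ) :
    Ftilde (x, π) = (amatMulVecLin (spinorCheck π) x, spinorCheck π) := rfl

theorem stmt_13 :
    Set.BijOn Ftilde {p : (Fin 4 → ℝ) × (Fin 2 → ℂ) | p.2 ≠ 0}
      {q : (Fin 2 → ℂ) × (Fin 2 → ℂ) | q.2 ≠ 0} := by
  refine ⟨fun p hp => spinorCheck_eq_zero_iff.not.mpr hp, ?_, ?_⟩
  · rintro ⟨x, π⟩ hπ ⟨y, π'⟩ - h
    simp only [Ftilde_mk, Prod.mk.injEq] at h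
    obtain rfl : π = π' := spinorCheck_bijective.1 h.2
    have hv : spinorCheck π ≠ 0 := spinorCheck_eq_zero_iff.not.mpr hπ
    rw [(amatMulVecLin_bijective hv).1 h.1]
  · rintro ⟨w, v⟩ (hv : v ≠ 0)
    obtain ⟨π, rfl⟩ := spinorCheck_bijective.2 v
    obtain ⟨x, rfl⟩ := (amatMulVecLin_bijective hv).2 w
    exact ⟨(x, π), spinorCheck_eq_zero_iff.not.mp hv, rfl⟩
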